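/- arXiv:0806.3380 — 4 statements merged into one kernel-verified Lean document; each statement's English description precedes it below -/
import Mathlib

section
/- Let H be a full additive subcategory of a triangulated category C which generates C (i.e., C is its own smallest full triangulated subcategory containing H). If w and w' are two weight structures on C whose hearts both contain H, then w = w', i.e., C_{w≤0} = C_{w'≤0} and C_{w≥0} = C_{w'≥0}. -/
open CategoryTheory CategoryTheory.Limits CategoryTheory.Pretriangulated

universe v u

/-- The shift `S[n]` of a class of objects `S`: the objects isomorphic to `A⟦n⟧`
for some `A ∈ S`. -/
def shiftedSet {C : Type u} [Category.{v} C] [HasShift C ℤ] (S : Set C) (n : ℤ) : Set C :=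
  {X | ∃ A ∈ S, Nonempty (X ≅ A⟦n⟧)}

/-- A weight structure on a pretriangulated category `C`, following Bondarko. -/
structure WeightStructure (C : Type u) [Category.{v} C] [Preadditive C] [HasZeroObject C]
    [HasShift C ℤ] [∀ n : ℤ, (shiftFunctor C n).Additive] [Pretriangulated C] where
  /-- the objects of weights `≤ 0` -/
  le : Set C
  /-- the objects of weights `≥ 0` -/
  ge : Set C
  /-- `C_{w ≤ 0}` is closed under retracts -/
  retract_le : ∀ (X M : C) (i : X ⟶ M) (r : M ⟶ X), i ≫ r = 𝟙 X → M ∈ le → X ∈ le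
  /-- `C_{w ≥ 0}` is closed under retracts -/
  retract_ge : ∀ (X M : C) (i : X ⟶ M) (r : M ⟶ X), i ≫ r = 𝟙 X → M ∈ ge → X ∈ ge
  /-- `C_{w ≤ 0} ⊆ C_{w ≤ 1}` -/
  le_shift : le ⊆ shiftedSet le 1
  /-- `C_{w ≥ 1} ⊆ C_{w ≥ 0}` -/
  ge_shift : shiftedSet ge 1 ⊆ ge
  /-- orthogonality -/
  orth : ∀ (M N : C), M ∈ le → N ∈ shiftedSet ge 1 → ∀ f : M ⟶ N, f = 0
  /-- existence of weight filtrations -/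
  exists_wf : ∀ M : C, ∃ (A B : C) (a : A ⟶ M) (b : M ⟶ B) (δ : B ⟶ A⟦(1:ℤ)⟧),
    Triangle.mk a b δ ∈ (distTriang C) ∧ A ∈ le ∧ B ∈ shiftedSet ge 1

namespace WeightStructure

variable {C : Type u} [Category.{v} C] [Preadditive C] [HasZeroObject C]
  [HasShift C ℤ] [∀ n : ℤ, (shiftFunctor C n).Additive] [Pretriangulated C]

/-- `C_{w ≤ n} := C_{w ≤ 0}[n]`. -/
def wLE (w : WeightStructure C) (n : ℤ) : Set C := shiftedSet w.le n

/-- `C_{w ≥ n} := C_{w ≥ 0}[n]`. -/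
def wGE (w : WeightStructure C) (n : ℤ) : Set C := shiftedSet w.ge n

/-- The heart `C_{w = 0} := C_{w ≤ 0} ∩ C_{w ≥ 0}`. -/
def heart (w : WeightStructure C) : Set C := w.le ∩ w.ge

/-- An object `M` is without weights `m, …, n` if it admits a weight filtration
avoiding these weights. -/
def WithoutWeights (w : WeightStructure C) (m n : ℤ) (M : C) : Prop :=
  ∃ (A B : C) (a : A ⟶ M) (b : M ⟶ B) (δ : B ⟶ A⟦(1:ℤ)⟧),
    Triangle.mk a b δ ∈ (distTriang C) ∧ A ∈ w.wLE (m - 1) ∧ B ∈ w.wGE (n + 1)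

end WeightStructure

/-- `H` is a (full) additive subcategory of `C` : it contains the zero objects and is
closed under biproducts (direct sums) taken in `C`. -/
def IsAdditiveSubcategory {C : Type u} [Category.{v} C] [Preadditive C] (H : Set C) : Prop :=
  (∀ X : C, Limits.IsZero X → X ∈ H) ∧
  (∀ (X Y Z : C), X ∈ H → Y ∈ H →
    ∀ (iX : X ⟶ Z) (iY : Y ⟶ Z) (pX : Z ⟶ X) (pY : Z ⟶ Y),
      iX ≫ pX = 𝟙 X → iY ≫ pY = 𝟙 Y → iX ≫ pY = 0 → iY ≫ pX = 0 →
      pX ≫ iX + pY ≫ iY = 𝟙 Z → Z ∈ H)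

/-- The smallest class of objects of `C` containing `H` and closed under isomorphisms,
shifts, and cones of morphisms. -/
inductive IsGenerated {C : Type u} [Category.{v} C] [Preadditive C] [HasZeroObject C]
    [HasShift C ℤ] [∀ n : ℤ, (shiftFunctor C n).Additive] [Pretriangulated C]
    (H : Set C) : C → Prop
  | of {X : C} (hX : X ∈ H) : IsGenerated H X
  | iso {X Y : C} (e : X ≅ Y) (hX : IsGenerated H X) : IsGenerated H Y
  | shift {X : C} (n : ℤ) (hX : IsGenerated H X) : IsGenerated H (X⟦n⟧)
  | cone {X Y Z : C} (f : X ⟶ Y) (g : Y ⟶ Z) (h : Z ⟶ X⟦(1:ℤ)⟧)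
      (hT : Triangle.mk f g h ∈ distTriang C)
      (hX : IsGenerated H X) (hY : IsGenerated H Y) : IsGenerated H Z

/-- `H` generates `C` as a triangulated category. -/
def Generates {C : Type u} [Category.{v} C] [Preadditive C] [HasZeroObject C]
    [HasShift C ℤ] [∀ n : ℤ, (shiftFunctor C n).Additive] [Pretriangulated C]
    (H : Set C) : Prop :=
  ∀ X : C, IsGenerated H X

/-!
Every object generated by `H` admits, in each degree `n`, one morphism `a : A ⟶ X` that is the
first map of a weight decomposition for `w` and for `w'` at the same time. For objects of `H`
take `𝟙 X` or `0 ⟶ X`. The property is stable under isomorphisms and shifts, and for a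
distinguished triangle `X ⟶ Y ⟶ Z ⟶ X⟦1⟧` one lifts `X ⟶ Y` to the parts of weights `≤ n - 1`
and `≤ n`, completes it to a morphism of triangles, and shows that the cone of its third
component has weights `≥ n + 1` by a four-lemma argument for `Hom(Q, -)`, which replaces the
octahedral axiom. Finally, if `X` has weights `≤ 0` for `w`, orthogonality makes `X` a retract of
the `A` of a common decomposition in degree `0`, so `X` has weights `≤ 0` for `w'`; dually for
`≥ 0`.
-/

namespace CategoryTheory.Pretriangulated

variable {C : Type u} [Category.{v} C] [Preadditive C] [HasZeroObject C]
  [HasShift C ℤ] [∀ n : ℤ, (CategoryTheory.shiftFunctor C n).Additive] [Pretriangulated C]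

lemma Triangle.mk_comp_iso_distinguished {A M B X : C} {a : A ⟶ M} {b : M ⟶ B}
    {c : B ⟶ A⟦(1 : ℤ)⟧} (hT : Triangle.mk a b c ∈ distTriang C) (e : M ≅ X) :
    Triangle.mk (a ≫ e.hom) (e.inv ≫ b) c ∈ distTriang C := by
  refine isomorphic_distinguished _ hT _
    (Triangle.isoMk _ _ (Iso.refl _) e.symm (Iso.refl _) ?_ (Category.comp_id _) ?_)
  · exact (Category.assoc _ _ _).trans
      ((a ≫= e.hom_inv_id).trans ((Category.comp_id a).trans (Category.id_comp a).symm))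
  · exact (c ≫= (CategoryTheory.shiftFunctor C (1 : ℤ)).map_id A).trans
      ((Category.comp_id c).trans (Category.id_comp c).symm)

lemma Triangle.forall_hom_obj₃_eq_zero_iff {T : Triangle C} (hT : T ∈ distTriang C) (Q : C) :
    (∀ g : Q ⟶ T.obj₃, g = 0) ↔
      (∀ x : Q ⟶ T.obj₂, ∃ y, y ≫ T.mor₁ = x) ∧
        ∀ y : Q ⟶ T.obj₁⟦(1 : ℤ)⟧, y ≫ T.mor₁⟦1⟧' = 0 → y = 0 := by
  constructor
  · intro h
    refine ⟨fun x => ?_, fun y hy => ?_⟩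
    · obtain ⟨y, rfl⟩ := coyoneda_exact₂ T hT x (h _)
      exact ⟨y, rfl⟩
    · obtain ⟨g, rfl⟩ := coyoneda_exact₁ T hT y hy
      rw [h g, zero_comp]
  · rintro ⟨hsurj, hinj⟩ q
    have hq₃ : q ≫ T.mor₃ = 0 :=
      hinj _ (by rw [Category.assoc, comp_distTriang_mor_zero₃₁ T hT, comp_zero])
    obtain ⟨x, rfl⟩ := coyoneda_exact₃ T hT q hq₃
    obtain ⟨y, rfl⟩ := hsurj x
    rw [Category.assoc, comp_distTriang_mor_zero₁₂ T hT, comp_zero]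

lemma Triangle.forall_hom_obj₃_shift_eq_zero_imp {T : Triangle C} (hT : T ∈ distTriang C) {Q : C}
    (h : ∀ g : Q ⟶ T.obj₃⟦(1 : ℤ)⟧, g = 0) :
    (∀ x : Q ⟶ T.obj₂⟦(1 : ℤ)⟧, ∃ y, y ≫ T.mor₁⟦1⟧' = x) ∧
      ∀ y : Q ⟶ T.obj₁⟦(1 : ℤ)⟧⟦(1 : ℤ)⟧, y ≫ T.mor₁⟦1⟧'⟦1⟧' = 0 → y = 0 := by
  -- `T.rotate.rotate.rotate` is `T⟦1⟧` with all three morphisms negated.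
  have hT' := rot_of_distTriang _ (rot_of_distTriang _ (rot_of_distTriang _ hT))
  obtain ⟨hsurj, hinj⟩ := (Triangle.forall_hom_obj₃_eq_zero_iff hT' Q).1 h
  replace hsurj : ∀ x : Q ⟶ T.obj₂⟦(1 : ℤ)⟧, ∃ y, y ≫ (-T.mor₁⟦1⟧') = x := hsurj
  replace hinj : ∀ y : Q ⟶ T.obj₁⟦(1 : ℤ)⟧⟦(1 : ℤ)⟧, y ≫ (-T.mor₁⟦1⟧')⟦1⟧' = 0 → y = 0 := hinj
  refine ⟨fun x => ?_, fun y hy => hinj y ?_⟩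
  · obtain ⟨y, hy⟩ := hsurj x
    exact ⟨-y, by rw [Preadditive.neg_comp, ← Preadditive.comp_neg, hy]⟩
  · rw [Functor.map_neg, Preadditive.comp_neg, hy, neg_zero]

variable {T₁ T₂ : Triangle C} (φ : T₁ ⟶ T₂) (hT₁ : T₁ ∈ distTriang C) (hT₂ : T₂ ∈ distTriang C)
  {Q : C}
include hT₁ hT₂

lemma Triangle.exists_comp_hom₃_eq
    (h₂ : ∀ x : Q ⟶ T₂.obj₂, ∃ y, y ≫ φ.hom₂ = x)
    (h₁ : ∀ x : Q ⟶ T₂.obj₁⟦(1 : ℤ)⟧, ∃ y, y ≫ φ.hom₁⟦1⟧' = x)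
    (h₂' : ∀ y : Q ⟶ T₁.obj₂⟦(1 : ℤ)⟧, y ≫ φ.hom₂⟦1⟧' = 0 → y = 0)
    (x : Q ⟶ T₂.obj₃) : ∃ y, y ≫ φ.hom₃ = x := by
  obtain ⟨z, hz⟩ := h₁ (x ≫ T₂.mor₃)
  have hz₁ : z ≫ T₁.mor₁⟦1⟧' = 0 := h₂' _ (by
    rw [Category.assoc, ← Functor.map_comp, φ.comm₁, Functor.map_comp, ← Category.assoc, hz,
      Category.assoc, comp_distTriang_mor_zero₃₁ T₂ hT₂, comp_zero])
  obtain ⟨χ, rfl⟩ := coyoneda_exact₁ T₁ hT₁ z hz₁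
  have hx : (x - χ ≫ φ.hom₃) ≫ T₂.mor₃ = 0 := by
    rw [Preadditive.sub_comp, Category.assoc, ← φ.comm₃, ← Category.assoc, hz, sub_self]
  obtain ⟨v, hv⟩ := coyoneda_exact₃ T₂ hT₂ _ hx
  obtain ⟨u, rfl⟩ := h₂ v
  refine ⟨χ + u ≫ T₁.mor₂, ?_⟩
  rw [Preadditive.add_comp, Category.assoc, φ.comm₂, ← Category.assoc, ← hv]
  abel

lemma Triangle.eq_zero_of_comp_hom₃_eq_zero
    (h₁ : ∀ x : Q ⟶ T₂.obj₁, ∃ y, y ≫ φ.hom₁ = x)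
    (h₂ : ∀ y : Q ⟶ T₁.obj₂, y ≫ φ.hom₂ = 0 → y = 0)
    (h₁' : ∀ y : Q ⟶ T₁.obj₁⟦(1 : ℤ)⟧, y ≫ φ.hom₁⟦1⟧' = 0 → y = 0)
    (x : Q ⟶ T₁.obj₃) (hx : x ≫ φ.hom₃ = 0) : x = 0 := by
  have hx₃ : x ≫ T₁.mor₃ = 0 :=
    h₁' _ (by rw [Category.assoc, φ.comm₃, ← Category.assoc, hx, zero_comp])
  obtain ⟨y, rfl⟩ := coyoneda_exact₃ T₁ hT₁ x hx₃
  have hy : (y ≫ φ.hom₂) ≫ T₂.mor₂ = 0 := by rw [Category.assoc, ← φ.comm₂, ← Category.assoc, hx]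
  obtain ⟨z, hz⟩ := coyoneda_exact₂ T₂ hT₂ _ hy
  obtain ⟨z', rfl⟩ := h₁ z
  have hyz : y - z' ≫ T₁.mor₁ = 0 := h₂ _ (by
    rw [Preadditive.sub_comp, hz, Category.assoc, Category.assoc, φ.comm₁, sub_self])
  rw [sub_eq_zero.1 hyz, Category.assoc, comp_distTriang_mor_zero₁₂ T₁ hT₁, comp_zero]

lemma Triangle.forall_hom_cone_hom₃_eq_zero
    {B₁ B₂ B₃ : C} {b₁ : T₂.obj₁ ⟶ B₁} {c₁ : B₁ ⟶ T₁.obj₁⟦(1 : ℤ)⟧}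
    {b₂ : T₂.obj₂ ⟶ B₂} {c₂ : B₂ ⟶ T₁.obj₂⟦(1 : ℤ)⟧}
    {b₃ : T₂.obj₃ ⟶ B₃} {c₃ : B₃ ⟶ T₁.obj₃⟦(1 : ℤ)⟧}
    (hD₁ : Triangle.mk φ.hom₁ b₁ c₁ ∈ distTriang C)
    (hD₂ : Triangle.mk φ.hom₂ b₂ c₂ ∈ distTriang C)
    (hD₃ : Triangle.mk φ.hom₃ b₃ c₃ ∈ distTriang C)
    (hB₁ : ∀ g : Q ⟶ B₁⟦(1 : ℤ)⟧, g = 0) (hB₂ : ∀ g : Q ⟶ B₂, g = 0) :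
    ∀ g : Q ⟶ B₃, g = 0 := by
  obtain ⟨surj₂, inj₂⟩ := (Triangle.forall_hom_obj₃_eq_zero_iff hD₂ Q).1 hB₂
  obtain ⟨surj₁, inj₁⟩ := Triangle.forall_hom_obj₃_shift_eq_zero_imp hD₁ hB₁
  refine (Triangle.forall_hom_obj₃_eq_zero_iff hD₃ Q).2
    ⟨Triangle.exists_comp_hom₃_eq φ hT₁ hT₂ surj₂ surj₁ inj₂, ?_⟩
  exact Triangle.eq_zero_of_comp_hom₃_eq_zero
    ((CategoryTheory.shiftFunctor (Triangle C) (1 : ℤ)).map φ)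
    (Triangle.shift_distinguished _ hT₁ 1) (Triangle.shift_distinguished _ hT₂ 1) surj₁ inj₂ inj₁

end CategoryTheory.Pretriangulated

section ShiftedSet

variable {C : Type u} [Category.{v} C] [HasShift C ℤ] {S : Set C}

lemma mem_shiftedSet_of_iso {X Y : C} (e : X ≅ Y) {n : ℤ} (hY : Y ∈ shiftedSet S n) :
    X ∈ shiftedSet S n := by
  obtain ⟨A, hA, ⟨e'⟩⟩ := hY
  exact ⟨A, hA, ⟨e ≪≫ e'⟩⟩

lemma shift_mem_shiftedSet {X : C} (hX : X ∈ S) (n : ℤ) : X⟦n⟧ ∈ shiftedSet S n :=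
  ⟨X, hX, ⟨Iso.refl _⟩⟩

lemma shift_mem_shiftedSet_add {X : C} {m : ℤ} (hX : X ∈ shiftedSet S m) (k : ℤ) :
    X⟦k⟧ ∈ shiftedSet S (m + k) := by
  obtain ⟨A, hA, ⟨e⟩⟩ := hX
  exact ⟨A, hA,
    ⟨(shiftFunctor C k).mapIso e ≪≫ ((shiftFunctorAdd' C m k (m + k) rfl).app A).symm⟩⟩

variable (hS : ∀ (X M : C) (i : X ⟶ M) (r : M ⟶ X), i ≫ r = 𝟙 X → M ∈ S → X ∈ S)
include hS

lemma mem_shiftedSet_iff {X : C} {n : ℤ} : X ∈ shiftedSet S n ↔ X⟦-n⟧ ∈ S := by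
  constructor
  · rintro ⟨A, hA, ⟨e⟩⟩
    let e' := (shiftFunctor C (-n)).mapIso e ≪≫ shiftShiftNeg A n
    exact hS _ _ e'.hom e'.inv e'.hom_inv_id hA
  · intro h
    exact ⟨X⟦-n⟧, h, ⟨(shiftNegShift X n).symm⟩⟩

lemma mem_shiftedSet_zero_iff {X : C} : X ∈ shiftedSet S 0 ↔ X ∈ S := by
  rw [mem_shiftedSet_iff hS, neg_zero]
  let e := (shiftFunctorZero C ℤ).app X
  exact ⟨hS _ _ e.inv e.hom e.inv_hom_id, hS _ _ e.hom e.inv e.hom_inv_id⟩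

lemma mem_shiftedSet_of_retract {X M : C} (i : X ⟶ M) (r : M ⟶ X) (hir : i ≫ r = 𝟙 X) {n : ℤ}
    (hM : M ∈ shiftedSet S n) : X ∈ shiftedSet S n := by
  rw [mem_shiftedSet_iff hS] at hM ⊢
  exact hS _ _ (i⟦-n⟧') (r⟦-n⟧')
    (by rw [← Functor.map_comp, hir, CategoryTheory.Functor.map_id]) hM

end ShiftedSet

namespace WeightStructure

open ZeroObject

variable {C : Type u} [Category.{v} C] [Preadditive C] [HasZeroObject C]
  [HasShift C ℤ] [∀ n : ℤ, (shiftFunctor C n).Additive] [Pretriangulated C]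
  (w : WeightStructure C)

lemma mem_wLE_zero_iff {X : C} : X ∈ w.wLE 0 ↔ X ∈ w.le := mem_shiftedSet_zero_iff w.retract_le

lemma mem_wGE_zero_iff {X : C} : X ∈ w.wGE 0 ↔ X ∈ w.ge := mem_shiftedSet_zero_iff w.retract_ge

lemma mem_wLE_of_retract {X M : C} (i : X ⟶ M) (r : M ⟶ X) (hir : i ≫ r = 𝟙 X) {n : ℤ}
    (hM : M ∈ w.wLE n) : X ∈ w.wLE n :=
  mem_shiftedSet_of_retract w.retract_le i r hir hM

lemma mem_wGE_of_retract {X M : C} (i : X ⟶ M) (r : M ⟶ X) (hir : i ≫ r = 𝟙 X) {n : ℤ}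
    (hM : M ∈ w.wGE n) : X ∈ w.wGE n :=
  mem_shiftedSet_of_retract w.retract_ge i r hir hM

lemma zero_mem_wLE (n : ℤ) : (0 : C) ∈ w.wLE n := by
  obtain ⟨A, -, -, -, -, -, hA, -⟩ := w.exists_wf 0
  exact w.mem_wLE_of_retract 0 0 (by simp) (shift_mem_shiftedSet hA n)

lemma zero_mem_wGE (n : ℤ) : (0 : C) ∈ w.wGE n := by
  obtain ⟨-, -, -, -, -, -, -, B, hB, -⟩ := w.exists_wf 0
  exact w.mem_wGE_of_retract 0 0 (by simp) (shift_mem_shiftedSet hB n)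

lemma wLE_mono {m n : ℤ} (h : m ≤ n) : w.wLE m ⊆ w.wLE n := by
  induction n, h using Int.leInduction with
  | base => exact subset_rfl
  | succ n _ ih =>
    refine ih.trans fun X hX => ?_
    obtain ⟨A, hA, ⟨e⟩⟩ := hX
    rw [add_comm]
    exact mem_shiftedSet_of_iso e (shift_mem_shiftedSet_add (w.le_shift hA) n)

lemma wGE_anti {m n : ℤ} (h : m ≤ n) : w.wGE n ⊆ w.wGE m := by
  induction n, h using Int.leInduction with
  | base => exact subset_rfl
  | succ n _ ih =>
    intro X hX
    apply ih
    obtain ⟨A, hA, ⟨e⟩⟩ := hX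
    exact mem_shiftedSet_of_iso (e ≪≫ (shiftFunctorAdd' C 1 n (n + 1) (add_comm 1 n)).app A)
      (shift_mem_shiftedSet (w.ge_shift (shift_mem_shiftedSet hA 1)) n)

lemma hom_eq_zero_of_lt {m n : ℤ} (hmn : m < n) {X Y : C} (hX : X ∈ w.wLE m)
    (hY : Y ∈ w.wGE n) (f : X ⟶ Y) : f = 0 := by
  have hX' : X⟦-m⟧ ∈ w.le := (mem_shiftedSet_iff w.retract_le).1 hX
  have hY' : Y⟦-m⟧ ∈ shiftedSet w.ge 1 := by
    simpa using shift_mem_shiftedSet_add (w.wGE_anti (Int.add_one_le_of_lt hmn) hY) (-m)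
  apply (shiftFunctor C (-m)).map_injective
  rw [Functor.map_zero]
  exact w.orth _ _ hX' hY' _

def IsWeightDecomposition (n : ℤ) {A X : C} (a : A ⟶ X) : Prop :=
  A ∈ w.wLE n ∧ ∃ (B : C) (b : X ⟶ B) (c : B ⟶ A⟦(1 : ℤ)⟧),
    Triangle.mk a b c ∈ distTriang C ∧ B ∈ w.wGE (n + 1)

variable {w}

lemma IsWeightDecomposition.comp_iso {n : ℤ} {A X Y : C} {a : A ⟶ X}
    (h : w.IsWeightDecomposition n a) (e : X ≅ Y) : w.IsWeightDecomposition n (a ≫ e.hom) := by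
  obtain ⟨hA, B, b, c, hT, hB⟩ := h
  exact ⟨hA, B, _, c, Triangle.mk_comp_iso_distinguished hT e, hB⟩

lemma IsWeightDecomposition.shift {n : ℤ} {A X : C} {a : A ⟶ X}
    (h : w.IsWeightDecomposition n a) (k : ℤ) :
    w.IsWeightDecomposition (n + k) (k.negOnePow • a⟦k⟧') := by
  obtain ⟨hA, B, b, c, hT, hB⟩ := h
  refine ⟨shift_mem_shiftedSet_add hA k, B⟦k⟧, _, _, Triangle.shift_distinguished _ hT k, ?_⟩
  rw [add_right_comm]
  exact shift_mem_shiftedSet_add hB k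

variable (w)

lemma exists_isWeightDecomposition (X : C) (n : ℤ) :
    ∃ (A : C) (a : A ⟶ X), w.IsWeightDecomposition n a := by
  obtain ⟨A, B, a, b, c, hT, hA, hB⟩ := w.exists_wf (X⟦-n⟧)
  have h₀ : w.IsWeightDecomposition 0 a :=
    ⟨w.mem_wLE_zero_iff.2 hA, B, b, c, hT, by rwa [zero_add]⟩
  have h := (h₀.shift n).comp_iso (shiftNegShift X n)
  rw [zero_add] at h
  exact ⟨_, _, h⟩

lemma mem_wGE_of_forall_hom_eq_zero {X : C} {n : ℤ} (h : ∀ Q ∈ w.wLE n, ∀ f : Q ⟶ X, f = 0) :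
    X ∈ w.wGE (n + 1) := by
  obtain ⟨A, a, hA, B, b, c, hT, hB⟩ := w.exists_isWeightDecomposition X n
  obtain ⟨r, hr⟩ := Triangle.yoneda_exact₂ _ hT (𝟙 X) (by
    change a ≫ 𝟙 X = 0
    rw [h A hA a, zero_comp])
  exact w.mem_wGE_of_retract b r hr.symm hB

lemma mem_wLE_of_forall_hom_eq_zero {X : C} {n : ℤ}
    (h : ∀ Y ∈ w.wGE (n + 1), ∀ f : X ⟶ Y, f = 0) : X ∈ w.wLE n := by
  obtain ⟨A, a, hA, B, b, c, hT, hB⟩ := w.exists_isWeightDecomposition X n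
  obtain ⟨s, hs⟩ := Triangle.coyoneda_exact₂ _ hT (𝟙 X) (by
    change 𝟙 X ≫ b = 0
    rw [h B hB b, comp_zero])
  exact w.mem_wLE_of_retract s a hs.symm hA

lemma mem_wLE_of_distTriang {T : Triangle C} (hT : T ∈ distTriang C) {n : ℤ}
    (h₁ : T.obj₁ ∈ w.wLE n) (h₃ : T.obj₃ ∈ w.wLE n) : T.obj₂ ∈ w.wLE n := by
  refine w.mem_wLE_of_forall_hom_eq_zero fun Y hY f => ?_
  obtain ⟨g, rfl⟩ := Triangle.yoneda_exact₂ T hT f (w.hom_eq_zero_of_lt (lt_add_one n) h₁ hY _)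
  rw [w.hom_eq_zero_of_lt (lt_add_one n) h₃ hY g, comp_zero]

variable {w}

lemma IsWeightDecomposition.hom₃ {T₁ T₂ : Triangle C} (φ : T₁ ⟶ T₂) (hT₁ : T₁ ∈ distTriang C)
    (hT₂ : T₂ ∈ distTriang C) {n : ℤ} (h₁ : w.IsWeightDecomposition (n - 1) φ.hom₁)
    (h₂ : w.IsWeightDecomposition n φ.hom₂) : w.IsWeightDecomposition n φ.hom₃ := by
  obtain ⟨hA₁, B₁, b₁, c₁, hD₁, hB₁⟩ := h₁
  obtain ⟨hA₂, B₂, b₂, c₂, hD₂, hB₂⟩ := h₂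
  obtain ⟨B₃, b₃, c₃, hD₃⟩ := distinguished_cocone_triangle φ.hom₃
  have hA₁' : T₁.obj₁⟦(1 : ℤ)⟧ ∈ w.wLE n := by
    rw [← sub_add_cancel n 1]
    exact shift_mem_shiftedSet_add hA₁ 1
  have hB₁' : B₁⟦(1 : ℤ)⟧ ∈ w.wGE (n + 1) := by
    rw [← sub_add_cancel n 1]
    exact shift_mem_shiftedSet_add hB₁ 1
  refine ⟨w.mem_wLE_of_distTriang (rot_of_distTriang _ hT₁) hA₂ hA₁', B₃, b₃, c₃, hD₃, ?_⟩
  exact w.mem_wGE_of_forall_hom_eq_zero fun Q hQ =>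
    Triangle.forall_hom_cone_hom₃_eq_zero φ hT₁ hT₂ hD₁ hD₂ hD₃
      (w.hom_eq_zero_of_lt (lt_add_one n) hQ hB₁') (w.hom_eq_zero_of_lt (lt_add_one n) hQ hB₂)

lemma isWeightDecomposition_id {X : C} (hX : X ∈ w.le) {n : ℤ} (hn : 0 ≤ n) :
    w.IsWeightDecomposition n (𝟙 X) :=
  ⟨w.wLE_mono hn (w.mem_wLE_zero_iff.2 hX), 0, 0, 0, contractible_distinguished X,
    w.zero_mem_wGE _⟩

lemma isWeightDecomposition_zero {X : C} (hX : X ∈ w.ge) {n : ℤ} (hn : n < 0) :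
    w.IsWeightDecomposition n (0 : 0 ⟶ X) :=
  ⟨w.zero_mem_wLE n, X, 𝟙 X, 0, contractible_distinguished₁ X,
    w.wGE_anti (Int.add_one_le_of_lt hn) (w.mem_wGE_zero_iff.2 hX)⟩

variable {w' : WeightStructure C}

lemma IsWeightDecomposition.mem_wLE {n : ℤ} {A X : C} {a : A ⟶ X}
    (hw : w.IsWeightDecomposition n a) (hw' : w'.IsWeightDecomposition n a)
    (hX : X ∈ w.wLE n) : X ∈ w'.wLE n := by
  obtain ⟨-, B, b, c, hT, hB⟩ := hw
  obtain ⟨s, hs⟩ := Triangle.coyoneda_exact₂ _ hT (𝟙 X) (by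
    change 𝟙 X ≫ b = 0
    rw [w.hom_eq_zero_of_lt (lt_add_one n) hX hB b, comp_zero])
  exact w'.mem_wLE_of_retract s a hs.symm hw'.1

lemma IsWeightDecomposition.mem_wGE {n : ℤ} {A X : C} {a : A ⟶ X}
    (hw : w.IsWeightDecomposition n a) (hw' : w'.IsWeightDecomposition n a)
    (hX : X ∈ w.wGE (n + 1)) : X ∈ w'.wGE (n + 1) := by
  obtain ⟨B, b, c, hT, hB⟩ := hw'.2
  obtain ⟨r, hr⟩ := Triangle.yoneda_exact₂ _ hT (𝟙 X) (by
    change a ≫ 𝟙 X = 0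
    rw [w.hom_eq_zero_of_lt (lt_add_one n) hw.1 hX a, zero_comp])
  exact w'.mem_wGE_of_retract b r hr.symm hB

variable (w w')

def HasCommonWeightDecompositions (X : C) : Prop :=
  ∀ n : ℤ, ∃ (A : C) (a : A ⟶ X), w.IsWeightDecomposition n a ∧ w'.IsWeightDecomposition n a

variable {w w'}

namespace HasCommonWeightDecompositions

lemma symm {X : C} (h : HasCommonWeightDecompositions w w' X) :
    HasCommonWeightDecompositions w' w X := fun n =>
  let ⟨A, a, ha, ha'⟩ := h n
  ⟨A, a, ha', ha⟩

lemma of_mem_heart {X : C} (hw : X ∈ w.heart) (hw' : X ∈ w'.heart) :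
    HasCommonWeightDecompositions w w' X := by
  intro n
  rcases le_or_gt 0 n with hn | hn
  · exact ⟨X, 𝟙 X, isWeightDecomposition_id hw.1 hn, isWeightDecomposition_id hw'.1 hn⟩
  · exact ⟨0, 0, isWeightDecomposition_zero hw.2 hn, isWeightDecomposition_zero hw'.2 hn⟩

lemma of_iso {X Y : C} (h : HasCommonWeightDecompositions w w' X) (e : X ≅ Y) :
    HasCommonWeightDecompositions w w' Y := fun n =>
  let ⟨A, a, ha, ha'⟩ := h n
  ⟨A, a ≫ e.hom, ha.comp_iso e, ha'.comp_iso e⟩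

lemma shift {X : C} (h : HasCommonWeightDecompositions w w' X) (k : ℤ) :
    HasCommonWeightDecompositions w w' (X⟦k⟧) := by
  intro n
  obtain ⟨A, a, ha, ha'⟩ := h (n - k)
  have hw := ha.shift k
  have hw' := ha'.shift k
  rw [sub_add_cancel] at hw hw'
  exact ⟨_, _, hw, hw'⟩

lemma of_distTriang {X Y Z : C} {f : X ⟶ Y} {g : Y ⟶ Z} {h : Z ⟶ X⟦(1 : ℤ)⟧}
    (hT : Triangle.mk f g h ∈ distTriang C) (hX : HasCommonWeightDecompositions w w' X)
    (hY : HasCommonWeightDecompositions w w' Y) : HasCommonWeightDecompositions w w' Z := by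
  intro n
  obtain ⟨AX, a, haw, haw'⟩ := hX (n - 1)
  obtain ⟨AY, a', ha'w, ha'w'⟩ := hY n
  obtain ⟨BY, b', c', hDY, hBY⟩ := ha'w.2
  obtain ⟨u, hu⟩ := Triangle.coyoneda_exact₂ _ hDY (a ≫ f)
    (w.hom_eq_zero_of_lt (by omega) haw.1 hBY _)
  obtain ⟨AZ, j, d, hE⟩ := distinguished_cocone_triangle u
  obtain ⟨ζ, hζ₂, hζ₃⟩ := complete_distinguished_triangle_morphism _ _ hE hT a a' hu.symm
  let φ := Triangle.homMk (Triangle.mk u j d) (Triangle.mk f g h) a a' ζ hu.symm hζ₂ hζ₃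
  exact ⟨AZ, ζ, haw.hom₃ φ hE hT ha'w, haw'.hom₃ φ hE hT ha'w'⟩

lemma of_isGenerated {H : Set C} (hw : H ⊆ w.heart) (hw' : H ⊆ w'.heart) {X : C}
    (hX : IsGenerated H X) : HasCommonWeightDecompositions w w' X := by
  induction hX with
  | of hX => exact of_mem_heart (hw hX) (hw' hX)
  | iso e _ ih => exact ih.of_iso e
  | shift k _ ih => exact ih.shift k
  | cone f g h hT _ _ ihX ihY => exact of_distTriang hT ihX ihY

lemma mem_le {X : C} (h : HasCommonWeightDecompositions w w' X) (hX : X ∈ w.le) : X ∈ w'.le := by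
  obtain ⟨A, a, ha, ha'⟩ := h 0
  exact w'.mem_wLE_zero_iff.1 (ha.mem_wLE ha' (w.mem_wLE_zero_iff.2 hX))

lemma mem_ge {X : C} (h : HasCommonWeightDecompositions w w' X) (hX : X ∈ w.ge) : X ∈ w'.ge := by
  obtain ⟨A, a, ha, ha'⟩ := h (-1)
  rw [← w.mem_wGE_zero_iff, ← neg_add_cancel (1 : ℤ)] at hX
  rw [← w'.mem_wGE_zero_iff, ← neg_add_cancel (1 : ℤ)]
  exact ha.mem_wGE ha' hX

end HasCommonWeightDecompositions

end WeightStructure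

/-- If `H` is a full additive subcategory generating the triangulated category `C`, then
any two weight structures on `C` whose hearts contain `H` coincide. -/
theorem weightStructure_unique_of_heart_subset
    {C : Type u} [Category.{v} C] [Preadditive C] [HasZeroObject C]
    [HasShift C ℤ] [∀ n : ℤ, (shiftFunctor C n).Additive] [Pretriangulated C]
    (H : Set C) (hadd : IsAdditiveSubcategory H) (hgen : Generates H)
    (w w' : WeightStructure C)
    (hw : H ⊆ w.heart) (hw' : H ⊆ w'.heart) :
    w.le = w'.le ∧ w.ge = w'.ge := by
  have h X := WeightStructure.HasCommonWeightDecompositions.of_isGenerated hw hw' (hgen X)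
  exact ⟨Set.ext fun X => ⟨(h X).mem_le, (h X).symm.mem_le⟩,
    Set.ext fun X => ⟨(h X).mem_ge, (h X).symm.mem_ge⟩⟩
end

section
/- Let H be a full additive subcategory of a triangulated category C which generates C. Then the following are equivalent: (i) there exists a weight structure on C whose heart contains H; (ii) H is negative, i.e., Hom_C(A, B[i]) = 0 for any two objects A, B of H and any integer i > 0. -/
open CategoryTheory CategoryTheory.Limits CategoryTheory.Pretriangulated

universe v u

/-!
A weight structure makes its heart left orthogonal to all positive shifts of itself, so `H` must
be negative.

Conversely, let `C_{w ≤ 0}` be the smallest class containing `H` and closed under `⟦-1⟧`,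
isomorphisms, retracts and extensions, and let `C_{w ≥ 0}` consist of the `N` with
`Hom(P, N⟦1⟧) = 0` for all `P ∈ C_{w ≤ 0}`; negativity of `H` puts `H` into `C_{w ≥ 0}`.
A weight decomposition of `M` is given by the cone of a map `a : A ⟶ M` with `A ∈ C_{w ≤ 0}` such
that, for every `P ∈ C_{w ≤ 0}`, `a` induces a surjection on `Hom(P, -)` and an injection
on `Hom(P, -⟦1⟧)`. Every shift of an object of `H` has such a cover (the identity in
nonpositive degrees, the zero map from `0` in positive degrees, by negativity), and a
five-lemma style argument builds a cover of the middle term of a distinguished triangle from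
covers of its outer terms. As `H` generates `C`, every object has a cover.
-/

open Category ZeroObject

section Shift

variable {C : Type u} [Category.{v} C] [Preadditive C] [HasShift C ℤ]
  [∀ n : ℤ, (shiftFunctor C n).Additive]

variable (C) in
abbrev shiftNegOneAdjunction : shiftFunctor C (-1 : ℤ) ⊣ shiftFunctor C (1 : ℤ) :=
  (shiftEquiv' C (-1) 1 (by norm_num)).toAdjunction

def shiftNegOneHomEquiv (X Y : C) : (X⟦(-1 : ℤ)⟧ ⟶ Y) ≃+ (X ⟶ Y⟦(1 : ℤ)⟧) :=
  (shiftNegOneAdjunction C).homAddEquiv X Y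

lemma shiftNegOneHomEquiv_comp {X Y Z : C} (f : X⟦(-1 : ℤ)⟧ ⟶ Y) (g : Y ⟶ Z) :
    shiftNegOneHomEquiv X Z (f ≫ g) = shiftNegOneHomEquiv X Y f ≫ g⟦(1 : ℤ)⟧' :=
  (shiftNegOneAdjunction C).homEquiv_naturality_right f g

def IsNegative (H : Set C) : Prop :=
  ∀ A B : C, A ∈ H → B ∈ H → ∀ i : ℤ, 0 < i → ∀ f : A ⟶ B⟦i⟧, f = 0

end Shift

namespace WeightStructure

variable {C : Type u} [Category.{v} C] [Preadditive C] [HasZeroObject C]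
  [HasShift C ℤ] [∀ n : ℤ, (shiftFunctor C n).Additive] [Pretriangulated C]
  (w : WeightStructure C)

lemma mem_ge_of_iso {X Y : C} (e : X ≅ Y) (hY : Y ∈ w.ge) : X ∈ w.ge :=
  w.retract_ge X Y e.hom e.inv e.hom_inv_id hY

lemma shift_mem_ge {X : C} (hX : X ∈ w.ge) {n : ℤ} (hn : 0 ≤ n) : X⟦n⟧ ∈ w.ge := by
  induction n, hn using Int.leInduction with
  | base => exact w.mem_ge_of_iso ((shiftFunctorZero C ℤ).app X) hX
  | succ n _ ih =>
    exact w.mem_ge_of_iso ((shiftFunctorAdd' C n 1 (n + 1) rfl).app X)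
      (w.ge_shift ⟨_, ih, ⟨Iso.refl _⟩⟩)

lemma hom_shift_eq_zero {A B : C} (hA : A ∈ w.le) (hB : B ∈ w.ge) {i : ℤ} (hi : 0 < i)
    (f : A ⟶ B⟦i⟧) : f = 0 :=
  w.orth A _ hA ⟨B⟦i - 1⟧, w.shift_mem_ge hB (by omega),
    ⟨(shiftFunctorAdd' C (i - 1) 1 i (by omega)).app B⟩⟩ f

lemma isNegative_of_subset_heart {H : Set C} (hH : H ⊆ w.heart) : IsNegative H :=
  fun _ _ hA hB _ hi f => w.hom_shift_eq_zero (hH hA).1 (hH hB).2 hi f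

end WeightStructure

section OfNegative

variable {C : Type u} [Category.{v} C] [Preadditive C] [HasZeroObject C]
  [HasShift C ℤ] [∀ n : ℤ, (shiftFunctor C n).Additive] [Pretriangulated C]

/-- The class `C_{w ≤ 0}` of the weight structure generated by `H`. -/
inductive LeHull (H : Set C) : C → Prop
  | of {X : C} (hX : X ∈ H) : LeHull H X
  | shift_neg_one {X : C} (hX : LeHull H X) : LeHull H (X⟦(-1 : ℤ)⟧)
  | iso {X Y : C} (e : X ≅ Y) (hX : LeHull H X) : LeHull H Y
  | retract {X M : C} (i : X ⟶ M) (r : M ⟶ X) (hir : i ≫ r = 𝟙 X) (hM : LeHull H M) :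
      LeHull H X
  | ext {X E Y : C} (u : X ⟶ E) (v : E ⟶ Y) (d : Y ⟶ X⟦(1 : ℤ)⟧)
      (hT : Triangle.mk u v d ∈ distTriang C) (hX : LeHull H X) (hY : LeHull H Y) : LeHull H E

/-- The class `C_{w ≥ 0}` of the weight structure generated by `H`. -/
def geOrth (H : Set C) : Set C :=
  {N | ∀ P, LeHull H P → ∀ f : P ⟶ N⟦(1 : ℤ)⟧, f = 0}

variable {H : Set C}

namespace LeHull

lemma zero {X : C} (hX : LeHull H X) : LeHull H 0 :=
  retract 0 0 ((isZero_zero C).eq_of_src _ _) hX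

lemma shift_of_nonpos {X : C} (hX : LeHull H X) {n : ℤ} (hn : n ≤ 0) : LeHull H (X⟦n⟧) := by
  induction n, hn using Int.leInductionDown with
  | base => exact iso ((shiftFunctorZero C ℤ).app X).symm hX
  | pred n _ ih =>
    exact iso ((shiftFunctorAdd' C n (-1) (n - 1) (by omega)).app X).symm (shift_neg_one ih)

lemma hom_shift_eq_zero (hH : IsNegative H) {P : C} (hP : LeHull H P) {B : C} (hB : B ∈ H)
    {k : ℤ} (hk : 0 < k) (f : P ⟶ B⟦k⟧) : f = 0 := by
  induction hP generalizing k with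
  | of hA => exact hH _ _ hA hB k hk f
  | @shift_neg_one X _ ih =>
    have : shiftNegOneHomEquiv X _ f ≫ ((shiftFunctorAdd' C k 1 (k + 1) rfl).app B).inv = 0 :=
      ih (by omega) _
    rwa [Preadditive.IsIso.comp_right_eq_zero, AddEquivClass.map_eq_zero_iff] at this
  | iso e _ ih => exact (Preadditive.IsIso.comp_left_eq_zero e.hom f).1 (ih hk _)
  | retract i r hir _ ih => rw [← id_comp f, ← hir, assoc, ih hk (r ≫ f), comp_zero]
  | ext u v d hT _ _ ihX ihY =>
    obtain ⟨q, hq⟩ := Triangle.yoneda_exact₂ _ hT f (ihX hk _)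
    rw [hq, ihY hk q]
    exact comp_zero

end LeHull

lemma IsNegative.subset_geOrth (hH : IsNegative H) : H ⊆ geOrth H :=
  fun _ hB _ hP f => LeHull.hom_shift_eq_zero hH hP hB one_pos f

lemma geOrth_of_retract {X M : C} (i : X ⟶ M) (r : M ⟶ X) (hir : i ≫ r = 𝟙 X)
    (hM : M ∈ geOrth H) : X ∈ geOrth H := by
  intro P hP f
  calc f = (f ≫ i⟦(1 : ℤ)⟧') ≫ r⟦(1 : ℤ)⟧' := by
        rw [assoc, ← Functor.map_comp, hir, CategoryTheory.Functor.map_id, comp_id]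
    _ = 0 := by rw [hM P hP (f ≫ i⟦(1 : ℤ)⟧'), zero_comp]

lemma geOrth_of_iso {X Y : C} (e : X ≅ Y) (hY : Y ∈ geOrth H) : X ∈ geOrth H :=
  geOrth_of_retract e.hom e.inv e.hom_inv_id hY

lemma shift_one_mem_geOrth {N : C} (hN : N ∈ geOrth H) : N⟦(1 : ℤ)⟧ ∈ geOrth H := by
  intro P hP f
  rw [← (shiftNegOneHomEquiv P _).apply_symm_apply f,
    hN _ hP.shift_neg_one ((shiftNegOneHomEquiv P _).symm f), map_zero]

lemma shiftedSet_geOrth_subset : shiftedSet (geOrth H) 1 ⊆ geOrth H := by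
  rintro N ⟨N', hN', ⟨e⟩⟩
  exact geOrth_of_iso e (shift_one_mem_geOrth hN')

lemma hom_eq_zero_of_mem_shiftedSet_geOrth {M N : C} (hM : LeHull H M)
    (hN : N ∈ shiftedSet (geOrth H) 1) (f : M ⟶ N) : f = 0 := by
  obtain ⟨N', hN', ⟨e⟩⟩ := hN
  exact (Preadditive.IsIso.comp_right_eq_zero f e.hom).1 (hN' M hM _)

lemma mem_shiftedSet_geOrth_of_forall_eq_zero {N : C} (hN : ∀ P, LeHull H P → ∀ f : P ⟶ N, f = 0) :
    N ∈ shiftedSet (geOrth H) 1 := by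
  let e := (shiftFunctorCompIsoId C (-1 : ℤ) 1 (by norm_num)).app N
  refine ⟨N⟦(-1 : ℤ)⟧, fun P hP f => ?_, ⟨e.symm⟩⟩
  exact (Preadditive.IsIso.comp_right_eq_zero f e.hom).1 (hN P hP _)

/-- A `C_{w ≤ 0}`-cover of `M`; its cone lies in `C_{w ≥ 1}` (`IsLeCover.exists_distTriang`). -/
structure IsLeCover (H : Set C) {A M : C} (a : A ⟶ M) : Prop where
  mem : LeHull H A
  lift : ∀ ⦃P⦄, LeHull H P → ∀ f : P ⟶ M, ∃ g : P ⟶ A, g ≫ a = f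
  eq_zero_of_comp_shift :
    ∀ ⦃P⦄, LeHull H P → ∀ h : P ⟶ A⟦(1 : ℤ)⟧, h ≫ a⟦(1 : ℤ)⟧' = 0 → h = 0

def HasLeCover (H : Set C) (M : C) : Prop :=
  ∃ (A : C) (a : A ⟶ M), IsLeCover H a

namespace IsLeCover

variable {A M : C} {a : A ⟶ M}

lemma lift_shift (ha : IsLeCover H a) {P : C} (hP : LeHull H P) (f : P ⟶ M⟦(1 : ℤ)⟧) :
    ∃ s : P ⟶ A⟦(1 : ℤ)⟧, s ≫ a⟦(1 : ℤ)⟧' = f := by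
  obtain ⟨g, hg⟩ := ha.lift hP.shift_neg_one ((shiftNegOneHomEquiv P M).symm f)
  exact ⟨shiftNegOneHomEquiv P A g,
    by rw [← shiftNegOneHomEquiv_comp, hg, AddEquiv.apply_symm_apply]⟩

lemma comp_iso (ha : IsLeCover H a) {M' : C} (e : M ≅ M') : IsLeCover H (a ≫ e.hom) where
  mem := ha.mem
  lift P hP f := by
    obtain ⟨g, hg⟩ := ha.lift hP (f ≫ e.inv)
    exact ⟨g, by rw [← assoc, hg, assoc, e.inv_hom_id, comp_id]⟩
  eq_zero_of_comp_shift P hP h hh := by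
    refine ha.eq_zero_of_comp_shift hP h ?_
    rw [Functor.map_comp, ← assoc] at hh
    exact (Preadditive.IsIso.comp_right_eq_zero _ _).1 hh

lemma id_of_mem {X : C} (hX : LeHull H X) : IsLeCover H (𝟙 X) where
  mem := hX
  lift _ _ f := ⟨f, comp_id f⟩
  eq_zero_of_comp_shift _ _ h hh := by simpa using hh

lemma zero_of_forall_eq_zero (h0 : LeHull H 0) (hM : ∀ P, LeHull H P → ∀ f : P ⟶ M, f = 0) :
    IsLeCover H (0 : 0 ⟶ M) where
  mem := h0
  lift P hP f := ⟨0, by rw [hM P hP f, zero_comp]⟩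
  eq_zero_of_comp_shift _ _ h _ := (Functor.map_isZero _ (isZero_zero C)).eq_of_tgt h 0

/-- Diagram chases as in the five lemma, in the long exact `Hom(P, -)` sequences of `T` and of
`A₁ ⟶ A₂ ⟶ A₃ ⟶ A₁⟦1⟧`. -/
lemma of_distTriang {T : Triangle C} (hT : T ∈ distTriang C) {A₁ A₂ A₃ : C}
    {a₁ : A₁ ⟶ T.obj₁} {a₃ : A₃ ⟶ T.obj₃} (ha₁ : IsLeCover H a₁) (ha₃ : IsLeCover H a₃)
    {i : A₁ ⟶ A₂} {p : A₂ ⟶ A₃} {s : A₃ ⟶ A₁⟦(1 : ℤ)⟧} (hA : Triangle.mk i p s ∈ distTriang C)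
    (hs : s ≫ a₁⟦(1 : ℤ)⟧' = a₃ ≫ T.mor₃) {m : A₂ ⟶ T.obj₂} (hm₁ : i ≫ m = a₁ ≫ T.mor₁)
    (hm₂ : p ≫ a₃ = m ≫ T.mor₂) : IsLeCover H m where
  mem := .ext i p s hA ha₁.mem ha₃.mem
  lift P hP f := by
    obtain ⟨g₃, hg₃⟩ := ha₃.lift hP (f ≫ T.mor₂)
    have hg₃s : g₃ ≫ s = 0 := ha₁.eq_zero_of_comp_shift hP _ (by
      rw [assoc, hs, ← assoc, hg₃, assoc, comp_distTriang_mor_zero₂₃ T hT, comp_zero])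
    obtain ⟨g₂, rfl⟩ : ∃ g₂ : P ⟶ A₂, g₃ = g₂ ≫ p :=
      Triangle.coyoneda_exact₃ _ hA g₃ hg₃s
    obtain ⟨e, he⟩ := Triangle.coyoneda_exact₂ T hT (f - g₂ ≫ m)
      (by rw [Preadditive.sub_comp, assoc, ← hm₂, ← assoc, hg₃, sub_self])
    obtain ⟨g₁, rfl⟩ := ha₁.lift hP e
    refine ⟨g₂ + g₁ ≫ i, ?_⟩
    rw [Preadditive.add_comp, assoc, hm₁, ← assoc, ← he]
    abel
  eq_zero_of_comp_shift P hP g hg := by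
    have hgp : g ≫ p⟦(1 : ℤ)⟧' = 0 := ha₃.eq_zero_of_comp_shift hP _ (by
      rw [assoc, ← Functor.map_comp, hm₂, Functor.map_comp, ← assoc, hg, zero_comp])
    obtain ⟨h, hh⟩ : ∃ h : P ⟶ A₁⟦(1 : ℤ)⟧, g = h ≫ (-i⟦(1 : ℤ)⟧') :=
      Triangle.coyoneda_exact₁ _ (rot_of_distTriang _ hA) g hgp
    have hgi : h ≫ i⟦(1 : ℤ)⟧' = -g := by rw [hh, Preadditive.comp_neg, neg_neg]
    obtain ⟨e, he⟩ := Triangle.coyoneda_exact₁ T hT (h ≫ a₁⟦(1 : ℤ)⟧') (by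
      rw [assoc, ← Functor.map_comp, ← hm₁, Functor.map_comp, ← assoc, hgi,
        Preadditive.neg_comp, hg, neg_zero])
    obtain ⟨t, rfl⟩ := ha₃.lift hP e
    have hts : h = t ≫ s := sub_eq_zero.1 <| ha₁.eq_zero_of_comp_shift hP _ <| by
      rw [Preadditive.sub_comp, he, assoc, assoc, ← hs, sub_self]
    have hsi : s ≫ i⟦(1 : ℤ)⟧' = 0 := comp_distTriang_mor_zero₃₁ _ hA
    rw [← neg_neg g, ← hgi, hts, assoc, hsi, comp_zero, neg_zero]

end IsLeCover

namespace HasLeCover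

lemma of_iso {M M' : C} (e : M ≅ M') (hM : HasLeCover H M) : HasLeCover H M' :=
  let ⟨_, _, ha⟩ := hM
  ⟨_, _, ha.comp_iso e⟩

lemma of_distTriang {T : Triangle C} (hT : T ∈ distTriang C) (h₁ : HasLeCover H T.obj₁)
    (h₃ : HasLeCover H T.obj₃) : HasLeCover H T.obj₂ := by
  obtain ⟨A₁, a₁, ha₁⟩ := h₁
  obtain ⟨A₃, a₃, ha₃⟩ := h₃
  obtain ⟨s, hs⟩ := ha₁.lift_shift ha₃.mem (a₃ ≫ T.mor₃)
  obtain ⟨A₂, i, p, hA⟩ := distinguished_cocone_triangle₂ s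
  obtain ⟨m, hm₁, hm₂⟩ :=
    complete_distinguished_triangle_morphism₂ (Triangle.mk i p s) T hA hT a₁ a₃ hs
  exact ⟨A₂, m, IsLeCover.of_distTriang hT ha₁ ha₃ hA hs hm₁ hm₂⟩

lemma shift_of_mem (hH : IsNegative H) {X : C} (hX : X ∈ H) (n : ℤ) : HasLeCover H (X⟦n⟧) := by
  rcases le_or_gt n 0 with hn | hn
  · exact ⟨_, _, IsLeCover.id_of_mem ((LeHull.of hX).shift_of_nonpos hn)⟩
  · exact ⟨0, 0, IsLeCover.zero_of_forall_eq_zero (LeHull.of hX).zero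
      fun _ hP f => LeHull.hom_shift_eq_zero hH hP hX hn f⟩

lemma shift_of_isGenerated (hH : IsNegative H) {M : C} (hM : IsGenerated H M) (n : ℤ) :
    HasLeCover H (M⟦n⟧) := by
  induction hM generalizing n with
  | of hX => exact shift_of_mem hH hX n
  | iso e _ ih => exact (ih n).of_iso ((shiftFunctor C n).mapIso e)
  | @shift X k _ ih =>
    exact (ih (k + n)).of_iso ((shiftFunctorAdd' C k n (k + n) rfl).app X)
  | @cone X Y Z u v w hT _ _ ihX ihY =>
    -- the rotated `n`-th shift of the triangle `X ⟶ Y ⟶ Z ⟶ X⟦1⟧` has `Z⟦n⟧` as middle term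
    refine of_distTriang (rot_of_distTriang _ (Triangle.shift_distinguished _ hT n)) (ihY n) ?_
    exact (ihX (n + 1)).of_iso ((shiftFunctorAdd' C n 1 (n + 1) rfl).app X)

lemma exists_distTriang {M : C} (hM : HasLeCover H M) :
    ∃ (A B : C) (a : A ⟶ M) (b : M ⟶ B) (δ : B ⟶ A⟦(1 : ℤ)⟧),
      Triangle.mk a b δ ∈ distTriang C ∧ LeHull H A ∧ B ∈ shiftedSet (geOrth H) 1 := by
  obtain ⟨A, a, ha⟩ := hM
  obtain ⟨B, b, δ, hT⟩ := distinguished_cocone_triangle a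
  refine ⟨A, B, a, b, δ, hT, ha.mem,
    mem_shiftedSet_geOrth_of_forall_eq_zero fun P hP f => ?_⟩
  have hδa : δ ≫ a⟦(1 : ℤ)⟧' = 0 := comp_distTriang_mor_zero₃₁ _ hT
  have hab : a ≫ b = 0 := comp_distTriang_mor_zero₁₂ _ hT
  have hfδ : f ≫ δ = 0 := ha.eq_zero_of_comp_shift hP _ (by rw [assoc, hδa, comp_zero])
  obtain ⟨e, rfl⟩ : ∃ e : P ⟶ M, f = e ≫ b := Triangle.coyoneda_exact₃ _ hT f hfδ
  obtain ⟨g, rfl⟩ := ha.lift hP e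
  rw [assoc, hab, comp_zero]

end HasLeCover

namespace IsNegative

variable (hH : IsNegative H) (hgen : Generates H)

def weightStructure : WeightStructure C where
  le := LeHull H
  ge := geOrth H
  retract_le _ _ i r hir hM := .retract i r hir hM
  retract_ge _ _ := geOrth_of_retract
  le_shift X hX := ⟨X⟦(-1 : ℤ)⟧, hX.shift_neg_one,
    ⟨((shiftFunctorCompIsoId C (-1 : ℤ) 1 (by norm_num)).app X).symm⟩⟩
  ge_shift := shiftedSet_geOrth_subset
  orth _ _ := hom_eq_zero_of_mem_shiftedSet_geOrth
  exists_wf M := ((HasLeCover.shift_of_isGenerated hH (hgen M) 0).of_iso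
    ((shiftFunctorZero C ℤ).app M)).exists_distTriang

lemma subset_heart_weightStructure : H ⊆ (hH.weightStructure hgen).heart :=
  fun _ hA => ⟨.of hA, hH.subset_geOrth hA⟩

end IsNegative

end OfNegative

/-- If `H` is a full additive subcategory generating the triangulated category `C`, then
there exists a weight structure whose heart contains `H` if and only if `H` is negative. -/
theorem exists_weightStructure_iff_negative
    {C : Type u} [Category.{v} C] [Preadditive C] [HasZeroObject C]
    [HasShift C ℤ] [∀ n : ℤ, (shiftFunctor C n).Additive] [Pretriangulated C]
    (H : Set C) (hadd : IsAdditiveSubcategory H) (hgen : Generates H) :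
    (∃ w : WeightStructure C, H ⊆ w.heart) ↔
      (∀ A B : C, A ∈ H → B ∈ H → ∀ i : ℤ, 0 < i → ∀ f : A ⟶ B⟦i⟧, f = 0) :=
  ⟨fun ⟨w, hw⟩ => w.isNegative_of_subset_heart hw,
    fun hH => ⟨IsNegative.weightStructure hH hgen,
      IsNegative.subset_heart_weightStructure hH hgen⟩⟩
end

section
/- Let C be a triangulated category with a weight structure w, and let m ≤ n be integers. If an object M of C admits a weight filtration avoiding weights m,…,n, then this filtration is unique up to unique isomorphism: given two weight filtrations A → M → B → A[1] and A' → M → B' → A'[1] of M avoiding weights m,…,n, there is a unique isomorphism of triangles between them extending the identity of M. -/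
open CategoryTheory CategoryTheory.Limits CategoryTheory.Pretriangulated

universe v u

/-!
By orthogonality of `C_{w ≤ p}` and `C_{w ≥ p + 1}` and the exact `Hom`-sequences of
distinguished triangles, if `T.obj₁` has weights `≤ p` and `T'.obj₃` has weights `≥ q` with
`p + 1 < q`, then every map `T.obj₂ ⟶ T'.obj₂` extends to a unique morphism of triangles
`T ⟶ T'`: existence because `Hom(T.obj₁, T'.obj₃) = 0`, uniqueness because
`Hom(T.obj₁, T'.obj₃⟦-1⟧) = 0 = Hom(T.obj₁⟦1⟧, T'.obj₃)`. Two weight filtrations avoiding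
`m, …, n` satisfy this in both directions with `p = m - 1`, `q = n + 1`, so the extensions
of `𝟙 M` are mutually inverse.
-/

lemma shift_mem_shiftedSet_s6 {C : Type u} [Category.{v} C] [HasShift C ℤ] {S : Set C} {X : C}
    {p : ℤ} (hX : X ∈ shiftedSet S p) (t q : ℤ) (hq : p + t = q) :
    (X⟦t⟧ : C) ∈ shiftedSet S q := by
  obtain ⟨A, hA, ⟨e⟩⟩ := hX
  exact ⟨A, hA, ⟨(shiftFunctor C t).mapIso e ≪≫ ((shiftFunctorAdd' C p t q hq).app A).symm⟩⟩

namespace WeightStructure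

variable {C : Type u} [Category.{v} C] [Preadditive C] [HasZeroObject C]
  [HasShift C ℤ] [∀ n : ℤ, (shiftFunctor C n).Additive] [Pretriangulated C]
  (w : WeightStructure C)

lemma wGE_succ_subset (k : ℤ) : w.wGE (k + 1) ⊆ w.wGE k := by
  rintro X ⟨B, hB, ⟨e⟩⟩
  exact ⟨B⟦(1 : ℤ)⟧, w.ge_shift ⟨B, hB, ⟨Iso.refl _⟩⟩,
    ⟨e ≪≫ (shiftFunctorAdd' C 1 k (k + 1) (add_comm 1 k)).app B⟩⟩

lemma wGE_antitone {p q : ℤ} (hpq : p ≤ q) : w.wGE q ⊆ w.wGE p := by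
  induction q, hpq using Int.leInduction with
  | base => exact subset_rfl
  | succ k _ ih => exact (w.wGE_succ_subset k).trans ih

lemma hom_eq_zero {p q : ℤ} (hpq : p < q) {X Y : C} (hX : X ∈ w.wLE p) (hY : Y ∈ w.wGE q)
    (f : X ⟶ Y) : f = 0 := by
  obtain ⟨A, hA, ⟨eX⟩⟩ := hX
  obtain ⟨B, hB, ⟨eY⟩⟩ := w.wGE_antitone (show p + 1 ≤ q by omega) hY
  -- Writing `Y ≅ (B⟦1⟧)⟦p⟧`, the map `f` is the `p`-th shift of a map `A ⟶ B⟦1⟧`.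
  let eY' : Y ≅ (B⟦(1 : ℤ)⟧)⟦p⟧ := eY ≪≫ (shiftFunctorAdd' C 1 p (p + 1) (add_comm 1 p)).app B
  have hg : (shiftFunctor C p).preimage (eX.inv ≫ f ≫ eY'.hom) = 0 :=
    w.orth _ _ hA ⟨B, hB, ⟨Iso.refl _⟩⟩ _
  have : eX.inv ≫ f ≫ eY'.hom = 0 := by
    rw [← (shiftFunctor C p).map_preimage (eX.inv ≫ f ≫ eY'.hom), hg, Functor.map_zero]
  simpa using this

variable {T T' : Triangle C} {p q : ℤ}

lemma eq_of_comp_mor₁_eq (hT' : T' ∈ distTriang C) (hpq : p + 1 < q) {X : C}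
    (hX : X ∈ w.wLE p) (hT'₃ : T'.obj₃ ∈ w.wGE q) {g₁ g₂ : X ⟶ T'.obj₁}
    (h : g₁ ≫ T'.mor₁ = g₂ ≫ T'.mor₁) : g₁ = g₂ := by
  obtain ⟨g, hg⟩ := Triangle.coyoneda_exact₂ _ (inv_rot_of_distTriang _ hT') (g₁ - g₂)
    (show (g₁ - g₂) ≫ T'.mor₁ = 0 by rw [Preadditive.sub_comp, h, sub_self])
  have hg0 : g = 0 :=
    w.hom_eq_zero (by omega) hX (shift_mem_shiftedSet_s6 hT'₃ (-1) (q - 1) (by ring)) g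
  rw [← sub_eq_zero, hg, hg0, zero_comp]
  rfl

lemma eq_of_mor₂_comp_eq (hT : T ∈ distTriang C) (hpq : p + 1 < q) {Y : C}
    (hT₁ : T.obj₁ ∈ w.wLE p) (hY : Y ∈ w.wGE q) {g₁ g₂ : T.obj₃ ⟶ Y}
    (h : T.mor₂ ≫ g₁ = T.mor₂ ≫ g₂) : g₁ = g₂ := by
  obtain ⟨g, hg⟩ := Triangle.yoneda_exact₃ _ hT (g₁ - g₂)
    (by rw [Preadditive.comp_sub, h, sub_self])
  have hg0 : g = 0 := w.hom_eq_zero (by omega) (shift_mem_shiftedSet_s6 hT₁ 1 (p + 1) rfl) hY g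
  rw [← sub_eq_zero, hg, hg0, comp_zero]

lemma existsUnique_triangleHom (hT : T ∈ distTriang C) (hT' : T' ∈ distTriang C)
    (hpq : p + 1 < q) (hT₁ : T.obj₁ ∈ w.wLE p) (hT'₃ : T'.obj₃ ∈ w.wGE q)
    (f : T.obj₂ ⟶ T'.obj₂) : ∃! φ : T ⟶ T', φ.hom₂ = f := by
  obtain ⟨β, hβ⟩ := Triangle.coyoneda_exact₂ _ hT' (T.mor₁ ≫ f)
    (w.hom_eq_zero (by omega) hT₁ hT'₃ _)
  obtain ⟨γ, hγ₂, hγ₃⟩ := complete_distinguished_triangle_morphism _ _ hT hT' β f hβ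
  refine ⟨Triangle.homMk _ _ β f γ hβ hγ₂ hγ₃, rfl, fun φ hφ => ?_⟩
  ext
  · exact w.eq_of_comp_mor₁_eq hT' hpq hT₁ hT'₃ (by rw [← φ.comm₁, hφ, hβ]; rfl)
  · exact hφ
  · exact w.eq_of_mor₂_comp_eq hT hpq hT₁ hT'₃ (by rw [φ.comm₂, hφ, ← hγ₂]; rfl)

lemma exists_triangleIso (hT : T ∈ distTriang C) (hT' : T' ∈ distTriang C) (hpq : p + 1 < q)
    (hT₁ : T.obj₁ ∈ w.wLE p) (hT₃ : T.obj₃ ∈ w.wGE q)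
    (hT'₁ : T'.obj₁ ∈ w.wLE p) (hT'₃ : T'.obj₃ ∈ w.wGE q)
    (e₂ : T.obj₂ ≅ T'.obj₂) : ∃ e : T ≅ T', e.hom.hom₂ = e₂.hom := by
  obtain ⟨φ, hφ, -⟩ := w.existsUnique_triangleHom hT hT' hpq hT₁ hT'₃ e₂.hom
  obtain ⟨ψ, hψ, -⟩ := w.existsUnique_triangleHom hT' hT hpq hT'₁ hT₃ e₂.inv
  have hφψ : φ ≫ ψ = 𝟙 T := (w.existsUnique_triangleHom hT hT hpq hT₁ hT₃ (𝟙 _)).unique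
    (by rw [comp_hom₂, hφ, hψ, e₂.hom_inv_id]) rfl
  have hψφ : ψ ≫ φ = 𝟙 T' := (w.existsUnique_triangleHom hT' hT' hpq hT'₁ hT'₃ (𝟙 _)).unique
    (by rw [comp_hom₂, hφ, hψ, e₂.inv_hom_id]) rfl
  exact ⟨⟨φ, ψ, hφψ, hψφ⟩, hφ⟩

end WeightStructure

/-- A weight filtration avoiding weights `m, …, n` is unique up to unique isomorphism. -/
theorem weightFiltration_unique
    {C : Type u} [Category.{v} C] [Preadditive C] [HasZeroObject C]
    [HasShift C ℤ] [∀ n : ℤ, (shiftFunctor C n).Additive] [Pretriangulated C]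
    (w : WeightStructure C) (m n : ℤ) (hmn : m ≤ n)
    (M A B A' B' : C)
    (a : A ⟶ M) (b : M ⟶ B) (δ : B ⟶ A⟦(1:ℤ)⟧)
    (hT : Triangle.mk a b δ ∈ distTriang C)
    (hA : A ∈ w.wLE (m - 1)) (hB : B ∈ w.wGE (n + 1))
    (a' : A' ⟶ M) (b' : M ⟶ B') (δ' : B' ⟶ A'⟦(1:ℤ)⟧)
    (hT' : Triangle.mk a' b' δ' ∈ distTriang C)
    (hA' : A' ∈ w.wLE (m - 1)) (hB' : B' ∈ w.wGE (n + 1)) :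
    ∃ (β : A ⟶ A') (γ : B ⟶ B'), IsIso β ∧ IsIso γ ∧
      β ≫ a' = a ∧ b ≫ γ = b' ∧ δ ≫ (shiftFunctor C (1:ℤ)).map β = γ ≫ δ' ∧
      ∀ (β' : A ⟶ A') (γ' : B ⟶ B'),
        β' ≫ a' = a → b ≫ γ' = b' → δ ≫ (shiftFunctor C (1:ℤ)).map β' = γ' ≫ δ' →
        β' = β ∧ γ' = γ := by
  have hweights : m - 1 + 1 < n + 1 := by omega
  obtain ⟨e, he⟩ := w.exists_triangleIso hT hT' hweights hA hB hA' hB' (Iso.refl M)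
  have he₁ : e.hom.hom₁ ≫ a' = a := by
    have h := e.hom.comm₁
    rw [he] at h
    exact h.symm.trans (Category.comp_id a)
  have he₃ : b ≫ e.hom.hom₃ = b' := by
    have h := e.hom.comm₂
    rw [he] at h
    exact h.trans (Category.id_comp b')
  refine ⟨e.hom.hom₁, e.hom.hom₃, (Triangle.π₁.mapIso e).isIso_hom,
    (Triangle.π₃.mapIso e).isIso_hom, he₁, he₃, e.hom.comm₃, fun β γ hβ hγ hδ => ?_⟩
  have h := (w.existsUnique_triangleHom hT hT' hweights hA hB' (𝟙 M)).unique
    (y₁ := Triangle.homMk _ _ β (𝟙 M) γ ((Category.comp_id a).trans hβ.symm)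
      (hγ.trans (Category.id_comp b').symm) hδ) rfl he
  exact ⟨congrArg TriangleMorphism.hom₁ h, congrArg TriangleMorphism.hom₃ h⟩
end

section
/- Let C be a triangulated category (satisfying the octahedron axiom) with a weight structure w. Fix a morphism u : M_- → M_+ with M_- ∈ C_{w≤0} and M_+ ∈ C_{w≥0}, a distinguished triangle C₀ → M_- →u M_+ → C₀[1], and assume C₀ is without weights -1 and 0. Let G ∈ C_{w=0}, π₀ : M_- → G, i₀ : G → M_+ be as produced by the main theorem (so that the corresponding triangles are weight filtrations of M_- avoiding weight -1 and of M_+ avoiding weight 1, and u = i₀ ∘ π₀). Suppose u factors as u = b ∘ a with a : M_- → N, b : N → M_+ and N an object of the heart C_{w=0}. Then G is canonically a direct factor of N with a canonical direct complement: there exist morphisms j : G → N and q : N → G with q ∘ j = id_G, an object P of C_{w=0}, and morphisms s : P → N, r : N → P with r ∘ s = id_P, q ∘ s = 0, r ∘ j = 0, and j ∘ q + s ∘ r = id_N (so N is a biproduct of G and P); moreover j : G → N is the unique factorization of a through π₀ (a = j ∘ π₀), and q : N → G is the unique factorization of b through i₀ (b = i₀ ∘ q). -/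
open CategoryTheory CategoryTheory.Limits CategoryTheory.Pretriangulated
open CategoryTheory.Preadditive

universe v u

namespace WeightStructure

variable {C : Type u} [Category.{v} C] [Preadditive C] [HasZeroObject C]
  [HasShift C ℤ] [∀ n : ℤ, (shiftFunctor C n).Additive] [Pretriangulated C]

lemma ge_of_iso (w : WeightStructure C) {X Y : C} (e : X ≅ Y) (h : Y ∈ w.ge) : X ∈ w.ge :=
  w.retract_ge X Y e.hom e.inv e.hom_inv_id h

lemma ge_shift' (w : WeightStructure C) {Y : C} (h : Y ∈ w.ge) (k : ℕ) :
    Y⟦(k : ℤ)⟧ ∈ w.ge := by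
  induction k with
  | zero => exact w.ge_of_iso ((shiftFunctorZero C ℤ).app Y) h
  | succ n ih =>
      apply w.ge_shift
      exact ⟨Y⟦(n : ℤ)⟧, ih,
        ⟨(shiftFunctorAdd' C (n : ℤ) 1 ((n : ℕ) + 1 : ℕ) (by push_cast; ring)).app Y⟩⟩

lemma shiftedSet_shift {S : Set C} {m : ℤ} {X : C} (h : X ∈ shiftedSet S m) (k n : ℤ)
    (hn : m + k = n) : X⟦k⟧ ∈ shiftedSet S n := by
  obtain ⟨A, hA, ⟨e⟩⟩ := h
  exact ⟨A, hA, ⟨(shiftFunctor C k).mapIso e ≪≫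
    ((shiftFunctorAdd' C m k n hn).app A).symm⟩⟩

lemma mem_wLE_zero (w : WeightStructure C) {X : C} (h : X ∈ w.le) : X ∈ w.wLE 0 :=
  ⟨X, h, ⟨((shiftFunctorZero C ℤ).app X).symm⟩⟩

lemma mem_wGE_zero (w : WeightStructure C) {X : C} (h : X ∈ w.ge) : X ∈ w.wGE 0 :=
  ⟨X, h, ⟨((shiftFunctorZero C ℤ).app X).symm⟩⟩

/-- Orthogonality for general weights: `Hom(X, Y) = 0` when `X ∈ C_{w ≤ m}`,
`Y ∈ C_{w ≥ n}` and `m < n`. -/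
lemma hom_zero (w : WeightStructure C) {X Y : C} {m n : ℤ}
    (hX : X ∈ w.wLE m) (hY : Y ∈ w.wGE n) (h : m < n) (f : X ⟶ Y) : f = 0 := by
  obtain ⟨X', hX', ⟨eX⟩⟩ := hX
  obtain ⟨Y', hY', ⟨eY⟩⟩ := hY
  suffices hg : eX.inv ≫ f ≫ eY.hom = 0 by
    have h2 := congrArg (fun t => eX.hom ≫ t ≫ eY.inv) hg
    simpa using h2
  set g : X'⟦m⟧ ⟶ Y'⟦n⟧ := eX.inv ≫ f ≫ eY.hom with hgdef
  clear_value g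
  apply (shiftFunctor C (-m)).map_injective
  rw [Functor.map_zero]
  set e1 : (X'⟦m⟧)⟦-m⟧ ≅ X' := (shiftFunctorCompIsoId C m (-m) (by ring)).app X' with he1
  set e2 : (Y'⟦n⟧)⟦-m⟧ ≅ Y'⟦n - m⟧ :=
    ((shiftFunctorAdd' C n (-m) (n - m) (by ring)).app Y').symm with he2
  have key : e1.inv ≫ (shiftFunctor C (-m)).map g ≫ e2.hom = 0 := by
    apply w.orth _ _ hX'
    obtain ⟨k, hk⟩ : ∃ k : ℕ, n - m - 1 = (k : ℤ) := ⟨(n - m - 1).toNat, by omega⟩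
    exact ⟨Y'⟦(k : ℤ)⟧, w.ge_shift' hY' k,
      ⟨(shiftFunctorAdd' C (k : ℤ) 1 (n - m) (by omega)).app Y'⟩⟩
  have : (shiftFunctor C (-m)).map g =
      e1.hom ≫ (e1.inv ≫ (shiftFunctor C (-m)).map g ≫ e2.hom) ≫ e2.inv := by simp
  rw [this, key]
  simp

end WeightStructure

/-- Abstract factorization: if `u : M₋ ⟶ M₊` has a cone `C₀[1]` with `C₀` without weights
`-1` and `0`, and `u = i₀ ∘ π₀` through the heart object `G` given by the main theorem,
then for any factorization `u = b ∘ a` through an object `N` of the heart, `G` is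
canonically a direct factor of `N`, with a canonical direct complement `P` in the heart;
the inclusion `j : G ⟶ N` and projection `q : N ⟶ G` are the unique factorizations of `a`
through `π₀` and of `b` through `i₀`, respectively. -/
theorem direct_factor_of_heart_factorization
    {C : Type u} [Category.{v} C] [Preadditive C] [HasZeroObject C]
    [HasShift C ℤ] [∀ n : ℤ, (shiftFunctor C n).Additive] [Pretriangulated C]
    [IsTriangulated C]
    (w : WeightStructure C) (Mm Mp C₀ : C) (u : Mm ⟶ Mp)
    (hMm : Mm ∈ w.le) (hMp : Mp ∈ w.ge)
    (vm : C₀ ⟶ Mm) (vp : Mp ⟶ C₀⟦(1:ℤ)⟧)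
    (hu : Triangle.mk vm u vp ∈ distTriang C)
    (hC₀ : w.WithoutWeights (-1) 0 C₀)
    (G : C) (hG : G ∈ w.heart) (π₀ : Mm ⟶ G) (i₀ : G ⟶ Mp)
    (A : C) (am : A ⟶ Mm) (δm : G ⟶ A⟦(1:ℤ)⟧)
    (hTm : Triangle.mk am π₀ δm ∈ distTriang C) (hA : A ∈ w.wLE (-2))
    (B : C) (bp : Mp ⟶ B) (δp : B ⟶ G⟦(1:ℤ)⟧)
    (hTp : Triangle.mk i₀ bp δp ∈ distTriang C) (hB : B ∈ w.wGE 2)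
    (hui : u = π₀ ≫ i₀)
    (N : C) (hN : N ∈ w.heart) (a : Mm ⟶ N) (b : N ⟶ Mp) (hab : u = a ≫ b) :
    ∃ (j : G ⟶ N) (q : N ⟶ G),
      π₀ ≫ j = a ∧ q ≫ i₀ = b ∧
      (∀ j' : G ⟶ N, π₀ ≫ j' = a → j' = j) ∧
      (∀ q' : N ⟶ G, q' ≫ i₀ = b → q' = q) ∧
      j ≫ q = 𝟙 G ∧
      ∃ (P : C) (_ : P ∈ w.heart) (s : P ⟶ N) (r : N ⟶ P),
        s ≫ r = 𝟙 P ∧ s ≫ q = 0 ∧ j ≫ r = 0 ∧ q ≫ j + r ≫ s = 𝟙 N := by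
  have hNle : N ∈ w.wLE 0 := w.mem_wLE_zero hN.1
  have hNge : N ∈ w.wGE 0 := w.mem_wGE_zero hN.2
  have hGle : G ∈ w.wLE 0 := w.mem_wLE_zero hG.1
  have hMpge : Mp ∈ w.wGE 0 := w.mem_wGE_zero hMp
  have hA1 : A⟦(1:ℤ)⟧ ∈ w.wLE (-1) := WeightStructure.shiftedSet_shift hA 1 (-1) (by ring)
  have hBm1 : B⟦(-1:ℤ)⟧ ∈ w.wGE 1 := WeightStructure.shiftedSet_shift hB (-1) 1 (by ring)
  -- injectivity of precomposition with π₀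
  have preinj : ∀ (X : C), X ∈ w.wGE 0 → ∀ d : G ⟶ X, π₀ ≫ d = 0 → d = 0 := by
    intro X hX d hd
    obtain ⟨g, hg⟩ := Triangle.yoneda_exact₃ _ hTm d hd
    rw [hg, w.hom_zero hA1 hX (by omega) g]; exact comp_zero
  -- injectivity of postcomposition with i₀
  have postinj : ∀ (X : C), X ∈ w.wLE 0 → ∀ d : X ⟶ G, d ≫ i₀ = 0 → d = 0 := by
    intro X hX d hd
    obtain ⟨g, hg⟩ := Triangle.coyoneda_exact₂ _
      (inv_rot_of_distTriang _ hTp) d hd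
    rw [hg, w.hom_zero hX hBm1 (by omega) g]; exact zero_comp
  -- existence of j
  obtain ⟨j', hj'⟩ := Triangle.yoneda_exact₂ _ hTm a
    (w.hom_zero hA hNge (by omega) _)
  -- existence of q
  obtain ⟨q', hq'⟩ := Triangle.coyoneda_exact₂ _ hTp b
    (w.hom_zero hNle hB (by omega) _)
  have hπj : π₀ ≫ j' = a := hj'.symm
  have hqi : q' ≫ i₀ = b := hq'.symm
  set j : G ⟶ N := j' with hjdef
  set q : N ⟶ G := q' with hqdef
  clear_value j q
  clear hj' hq' hjdef hqdef j' q'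
  have hjq : j ≫ q = 𝟙 G := by
    have h1 : j ≫ q ≫ i₀ = i₀ := by
      apply sub_eq_zero.mp
      apply preinj Mp hMpge
      rw [Preadditive.comp_sub, sub_eq_zero, ← Category.assoc, hπj]
      exact (congrArg (a ≫ ·) hqi).trans (hab.symm.trans hui)
    apply sub_eq_zero.mp
    apply postinj G hGle
    simp only [Preadditive.sub_comp, Category.assoc, h1, Category.id_comp, sub_self]
  refine ⟨j, q, hπj, hqi, ?_, ?_, hjq, ?_⟩
  · intro j'' hj''
    apply sub_eq_zero.mp
    apply preinj N hNge
    rw [Preadditive.comp_sub, hj'', hπj, sub_self]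
  · intro q'' hq''
    apply sub_eq_zero.mp
    apply postinj N hNle
    rw [Preadditive.sub_comp, hq'']; exact sub_eq_zero.mpr hqi.symm
  -- the complement
  obtain ⟨P, p, δ, hTj⟩ := distinguished_cocone_triangle j
  have hjp : j ≫ p = 0 := comp_distTriang_mor_zero₁₂ _ hTj
  have hδ : δ = 0 := by
    have h31 : δ ≫ j⟦(1:ℤ)⟧' = 0 := comp_distTriang_mor_zero₃₁ _ hTj
    calc δ = δ ≫ (j ≫ q)⟦(1:ℤ)⟧' := by rw [hjq]; simp
    _ = (δ ≫ j⟦(1:ℤ)⟧') ≫ q⟦(1:ℤ)⟧' := by rw [Functor.map_comp, Category.assoc]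
    _ = 0 := by rw [h31, zero_comp]
  obtain ⟨s₀', hs₀'⟩ := Triangle.coyoneda_exact₃ _ hTj (𝟙 P) (by simp [hδ]; exact comp_zero)
  set s₀ : P ⟶ N := s₀' with hs₀def
  have hs₀p : s₀ ≫ p = 𝟙 P := hs₀'.symm
  clear_value s₀
  clear hs₀' hs₀def s₀'
  have hsq : (s₀ - s₀ ≫ q ≫ j) ≫ q = 0 := by
    simp only [Preadditive.sub_comp, Category.assoc, hjq, Category.comp_id, sub_self]
  have hsp : (s₀ - s₀ ≫ q ≫ j) ≫ p = 𝟙 P := by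
    simp only [Preadditive.sub_comp, Category.assoc, hjp, comp_zero, sub_zero, hs₀p]
  refine ⟨P, ⟨w.retract_le P N s₀ p hs₀p hN.1, w.retract_ge P N s₀ p hs₀p hN.2⟩,
    s₀ - s₀ ≫ q ≫ j, p, hsp, hsq, hjp, ?_⟩
  set s : P ⟶ N := s₀ - s₀ ≫ q ≫ j with hsdef
  clear_value s
  have hjh : j ≫ (𝟙 N - q ≫ j - p ≫ s) = 0 := by
    simp only [Preadditive.comp_sub, Category.comp_id, ← Category.assoc, hjq, hjp,
      Category.id_comp, zero_comp, sub_self, sub_zero]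
  obtain ⟨t, ht'⟩ := Triangle.yoneda_exact₂ _ hTj _ hjh
  have ht : 𝟙 N - q ≫ j - p ≫ s = p ≫ t := ht'
  have hsh : s ≫ (𝟙 N - q ≫ j - p ≫ s) = 0 := by
    simp only [Preadditive.comp_sub, Category.comp_id, ← Category.assoc, hsq, hsp,
      Category.id_comp, zero_comp, sub_zero, sub_self]
  have ht0 : t = 0 := by
    have h2 := hsh
    have h5 := (Category.assoc s p t).trans ((congrArg (s ≫ ·) ht).symm.trans h2)
    exact (Category.id_comp t).symm.trans ((congrArg (· ≫ t) hsp).symm.trans h5)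
  have h : 𝟙 N - q ≫ j = p ≫ s := by
    have h3 : 𝟙 N - q ≫ j - p ≫ s = 0 := by rw [ht, ht0]; exact comp_zero
    have := sub_eq_zero.mp h3
    exact this
  rw [← h]
  abel
end
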